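/- arXiv:2601.05588 — 2 statements merged into one kernel-verified Lean document; each statement's English description precedes it below -/
import Mathlib

section
/- Let k ≥ 2 and n ≥ 1 be natural numbers with n < k/2 − k/(2·ln k). Then n < ln(k!)/(2·ln k), and hence for every family of k points d₁, …, d_k in ℝⁿ there exists a permutation π of {1, …, k} such that no point q ∈ ℝⁿ satisfies ‖q − d_{π(1)}‖₂ < ‖q − d_{π(2)}‖₂ < ⋯ < ‖q − d_{π(k)}‖₂. In particular, the embedding dimension of a dual encoder must grow linearly in the corpus size k in order to solve a complete ranking task. -/
/-!
A query realizing the ordering `π` lies in the open cell of the arrangement of the `k (k - 1)`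
bisector hyperplanes `‖x - d s‖ = ‖x - d t‖` whose sign vector records `π`, so distinct orderings
need distinct cells. An arrangement of `m` hyperplanes in dimension `n` has at most `(m + 1) ^ n`
cells: deleting one hyperplane merges only pairs of cells lying on both sides of it, and these
correspond to cells of the remaining arrangement restricted to that hyperplane. Hence
`k ! ≤ k ^ (2 n)`, contradicting `log k ! ≥ k log k - k` under the hypothesis on `n`.
-/

open Finset Module
open scoped Nat

theorem Finset.card_eq_card_image_erase_add_card_inter {α : Type*} [DecidableEq α]
    (𝒜 : Finset (Finset α)) (a : α) :
    #𝒜 = #(𝒜.image (·.erase a)) + #(𝒜.memberSubfamily a ∩ 𝒜.nonMemberSubfamily a) := by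
  rw [← memberSubfamily_union_nonMemberSubfamily, card_union_add_card_inter,
    card_memberSubfamily_add_card_nonMemberSubfamily]

section SignPatterns

variable {ι V P : Type*} [AddCommGroup V] [Module ℝ V] [AddTorsor V P]

def HasSignPatternAt (f : ι → P →ᵃ[ℝ] ℝ) (s A : Finset ι) (x : P) : Prop :=
  A ⊆ s ∧ ∀ i ∈ s, f i x ≠ 0 ∧ (i ∈ A ↔ 0 < f i x)

open Classical in
noncomputable def signPatterns (f : ι → P →ᵃ[ℝ] ℝ) (s : Finset ι) : Finset (Finset ι) :=
  {A ∈ s.powerset | ∃ x, HasSignPatternAt f s A x}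

variable {f : ι → P →ᵃ[ℝ] ℝ} {s A B : Finset ι} {a : ι} {x y : P}

theorem mem_signPatterns : A ∈ signPatterns f s ↔ ∃ x, HasSignPatternAt f s A x := by
  simp only [signPatterns, mem_filter, mem_powerset, and_iff_right_iff_imp]
  exact fun ⟨_, hA, _⟩ => hA

theorem HasSignPatternAt.unique (hA : HasSignPatternAt f s A x) (hB : HasSignPatternAt f s B x) :
    A = B := by
  ext i
  by_cases hi : i ∈ s
  · rw [(hA.2 i hi).2, (hB.2 i hi).2]
  · exact iff_of_false (fun h => hi (hA.1 h)) (fun h => hi (hB.1 h))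

theorem HasSignPatternAt.erase_of_insert [DecidableEq ι]
    (hA : HasSignPatternAt f (insert a s) A x) (ha : a ∉ s) :
    HasSignPatternAt f s (A.erase a) x := by
  refine ⟨fun i hi => ?_, fun i hi => ?_⟩
  · obtain ⟨hia, hiA⟩ := mem_erase.1 hi
    exact (mem_insert.1 (hA.1 hiA)).resolve_left hia
  · rw [mem_erase, ← (hA.2 i (mem_insert_of_mem hi)).2]
    exact ⟨(hA.2 i (mem_insert_of_mem hi)).1, and_iff_right (ne_of_mem_of_not_mem hi ha)⟩

theorem HasSignPatternAt.lineMap (hx : HasSignPatternAt f s A x) (hy : HasSignPatternAt f s A y)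
    {t : ℝ} (ht : t ∈ Set.Icc 0 1) : HasSignPatternAt f s A (AffineMap.lineMap x y t) := by
  refine ⟨hx.1, fun i hi => ?_⟩
  obtain ⟨hx0, hxA⟩ := hx.2 i hi
  obtain ⟨hy0, hyA⟩ := hy.2 i hi
  have hxy : 0 < f i x ↔ 0 < f i y := hxA.symm.trans hyA
  rw [AffineMap.apply_lineMap, hxA]
  rcases hx0.lt_or_gt with hxs | hxs
  · have hys : f i y < 0 := hy0.lt_of_le (not_lt.1 (mt hxy.2 hxs.not_gt))
    have := (convex_Iio (0 : ℝ)).lineMap_mem hxs hys ht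
    exact ⟨this.ne, iff_of_false hxs.not_gt (not_lt.2 (le_of_lt this))⟩
  · have := (convex_Ioi (0 : ℝ)).lineMap_mem hxs (hxy.1 hxs) ht
    exact ⟨this.ne', iff_of_true hxs this⟩

theorem AffineMap.apply_lineMap_div_sub_eq_zero (g : P →ᵃ[ℝ] ℝ) (hxy : g x ≠ g y) :
    g (AffineMap.lineMap x y (g x / (g x - g y))) = 0 := by
  rw [AffineMap.apply_lineMap, AffineMap.lineMap_apply_ring']
  field_simp [sub_ne_zero.2 hxy]
  ring

theorem exists_zero_hasSignPatternAt {g : P →ᵃ[ℝ] ℝ} (hx : HasSignPatternAt f s A x)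
    (hy : HasSignPatternAt f s A y) (hgx : 0 < g x) (hgy : g y < 0) :
    ∃ z, g z = 0 ∧ HasSignPatternAt f s A z := by
  have hxy : 0 < g x - g y := by linarith
  refine ⟨_, g.apply_lineMap_div_sub_eq_zero (by linarith), hx.lineMap hy ⟨by positivity, ?_⟩⟩
  rw [div_le_one hxy]
  linarith

theorem exists_of_mem_memberSubfamily_inter_nonMemberSubfamily [DecidableEq ι] (ha : a ∉ s)
    (hB : B ∈ (signPatterns f (insert a s)).memberSubfamily a ∩
      (signPatterns f (insert a s)).nonMemberSubfamily a) :
    ∃ x y, HasSignPatternAt f s B x ∧ HasSignPatternAt f s B y ∧ 0 < f a x ∧ f a y < 0 := by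
  simp only [mem_inter, mem_memberSubfamily, mem_nonMemberSubfamily, mem_signPatterns] at hB
  obtain ⟨⟨⟨x, hx⟩, haB⟩, ⟨y, hy⟩, -⟩ := hB
  refine ⟨x, y, ?_, ?_, ?_, ?_⟩
  · simpa [erase_insert haB] using hx.erase_of_insert ha
  · simpa [erase_eq_of_notMem haB] using hy.erase_of_insert ha
  · exact ((hx.2 a (mem_insert_self a s)).2).1 (mem_insert_self a B)
  · obtain ⟨hy0, hyB⟩ := hy.2 a (mem_insert_self a s)
    exact hy0.lt_of_le (not_lt.1 (mt hyB.2 haB))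

theorem AffineMap.exists_hyperplane_of_pos_of_neg [FiniteDimensional ℝ V] (g : P →ᵃ[ℝ] ℝ)
    (hgx : 0 < g x) (hgy : g y < 0) :
    ∃ (H : AffineSubspace ℝ P) (_ : Nonempty H),
      finrank ℝ H.direction + 1 = finrank ℝ V ∧ ∀ z, g z = 0 → z ∈ H := by
  set z₀ := AffineMap.lineMap x y (g x / (g x - g y))
  have hz₀ : g z₀ = 0 := g.apply_lineMap_div_sub_eq_zero (by linarith)
  have hg : g.linear ≠ 0 := fun h => by
    have := g.linearMap_vsub x y
    rw [h, LinearMap.zero_apply, vsub_eq_sub] at this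
    linarith
  refine ⟨AffineSubspace.mk' z₀ (LinearMap.ker g.linear), ⟨⟨z₀, AffineSubspace.self_mem_mk' _ _⟩⟩,
    ?_, fun z hz => ?_⟩
  · rw [AffineSubspace.direction_mk']
    exact Module.Dual.finrank_ker_add_one_of_ne_zero hg
  · rw [AffineSubspace.mem_mk', LinearMap.mem_ker, g.linearMap_vsub, hz, hz₀, vsub_self]

theorem image_erase_signPatterns_insert_subset [DecidableEq ι] (ha : a ∉ s) :
    (signPatterns f (insert a s)).image (·.erase a) ⊆ signPatterns f s := by
  intro B hB
  obtain ⟨A, hA, rfl⟩ := mem_image.1 hB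
  obtain ⟨x, hx⟩ := mem_signPatterns.1 hA
  exact mem_signPatterns.2 ⟨x, hx.erase_of_insert ha⟩

theorem card_signPatterns_le_one [Subsingleton P] : #(signPatterns f s) ≤ 1 := by
  refine card_le_one.2 fun A hA B hB => ?_
  obtain ⟨x, hx⟩ := mem_signPatterns.1 hA
  obtain ⟨y, hy⟩ := mem_signPatterns.1 hB
  exact hx.unique (Subsingleton.elim y x ▸ hy)

theorem signPatterns_subset_powerset : signPatterns f s ⊆ s.powerset :=
  fun _ hA => mem_powerset.2 (mem_signPatterns.1 hA).choose_spec.1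

theorem card_signPatterns_le [FiniteDimensional ℝ V] (f : ι → P →ᵃ[ℝ] ℝ) (s : Finset ι) :
    #(signPatterns f s) ≤ (#s + 1) ^ finrank ℝ V := by
  classical
  induction hN : finrank ℝ V generalizing V P s with
  | zero =>
    have : Subsingleton V := finrank_zero_iff.1 hN
    have : Subsingleton P := ⟨fun x y => vsub_eq_zero_iff_eq.1 (Subsingleton.elim _ _)⟩
    simpa using card_signPatterns_le_one
  | succ N ih =>
    induction s using Finset.induction_on with
    | empty => simpa using card_le_card (signPatterns_subset_powerset (f := f) (s := ∅))
    | insert a s ha ihs =>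
      set S := signPatterns f (insert a s)
      have hcross : #(S.memberSubfamily a ∩ S.nonMemberSubfamily a) ≤ (#s + 1) ^ N := by
        obtain h | ⟨B₀, hB₀⟩ := (S.memberSubfamily a ∩ S.nonMemberSubfamily a).eq_empty_or_nonempty
        · simp [h]
        obtain ⟨x, y, -, -, hgx, hgy⟩ :=
          exists_of_mem_memberSubfamily_inter_nonMemberSubfamily ha hB₀
        obtain ⟨H, _, hH, hmem⟩ := AffineMap.exists_hyperplane_of_pos_of_neg (f a) hgx hgy
        refine (card_le_card fun B hB => ?_).trans
          (ih (fun i => (f i).comp H.subtype) s (by omega))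
        obtain ⟨x, y, hx, hy, hgx, hgy⟩ :=
          exists_of_mem_memberSubfamily_inter_nonMemberSubfamily ha hB
        obtain ⟨z, hz, hzB⟩ := exists_zero_hasSignPatternAt hx hy hgx hgy
        exact mem_signPatterns.2 ⟨⟨z, hmem z hz⟩, hzB⟩
      calc #S = #(S.image (·.erase a)) + #(S.memberSubfamily a ∩ S.nonMemberSubfamily a) :=
            S.card_eq_card_image_erase_add_card_inter a
        _ ≤ (#s + 1) ^ (N + 1) + (#s + 1) ^ N :=
            add_le_add ((card_le_card (image_erase_signPatterns_insert_subset ha)).trans ihs) hcross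
        _ = (#s + 2) * (#s + 1) ^ N := by ring
        _ ≤ (#s + 2) * (#s + 2) ^ N := by gcongr; omega
        _ = (#(insert a s) + 1) ^ (N + 1) := by rw [card_insert_of_notMem ha]; ring

end SignPatterns

section DistancePermutations

variable {E κ : Type*} [NormedAddCommGroup E] [InnerProductSpace ℝ E]

noncomputable def sqDistDiff (d : κ → E) (p : κ × κ) : E →ᵃ[ℝ] ℝ :=
  (innerₛₗ ℝ (2 • (d p.1 - d p.2))).toAffineMap + AffineMap.const ℝ E (‖d p.2‖ ^ 2 - ‖d p.1‖ ^ 2)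

theorem sqDistDiff_apply (d : κ → E) (p : κ × κ) (x : E) :
    sqDistDiff d p x = ‖x - d p.2‖ ^ 2 - ‖x - d p.1‖ ^ 2 := by
  rw [norm_sub_sq_real, norm_sub_sq_real, real_inner_comm (d p.1), real_inner_comm (d p.2)]
  simp [sqDistDiff]
  ring

variable [LinearOrder κ] [Fintype κ]

def precedencePairs (π : Equiv.Perm κ) : Finset (κ × κ) :=
  {p ∈ univ.offDiag | π.symm p.1 < π.symm p.2}

theorem precedencePairs_injective : Function.Injective (precedencePairs (κ := κ)) := by
  intro π ρ h
  have hmono : StrictMono (π.trans ρ.symm) := fun i j hij => by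
    have : (π i, π j) ∈ precedencePairs π := by simp [precedencePairs, hij, hij.ne]
    rw [h, precedencePairs, mem_filter] at this
    simpa using this.2
  have hid :=
    Subsingleton.elim (hmono.orderIsoOfSurjective _ (Equiv.surjective _)) (OrderIso.refl κ)
  ext i
  simpa using congrArg ρ (DFunLike.congr_fun hid i)

theorem hasSignPatternAt_precedencePairs {d : κ → E} {π : Equiv.Perm κ} {q : E}
    (h : StrictMono fun i => ‖q - d (π i)‖) :
    HasSignPatternAt (sqDistDiff d) univ.offDiag (precedencePairs π) q := by
  refine ⟨filter_subset _ _, fun p hp => ?_⟩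
  have hdist : ∀ {s t : κ}, π.symm s < π.symm t → ‖q - d s‖ ^ 2 < ‖q - d t‖ ^ 2 := fun hst => by
    have := h hst
    simp only [Equiv.apply_symm_apply] at this
    gcongr
  rw [sqDistDiff_apply, precedencePairs, mem_filter, and_iff_right hp]
  rcases lt_or_gt_of_ne (π.symm.injective.ne (mem_offDiag.1 hp).2.2) with hlt | hlt
  · have := hdist hlt
    exact ⟨by linarith, iff_of_true hlt (by linarith)⟩
  · have := hdist hlt
    exact ⟨by linarith, iff_of_false hlt.not_gt (by linarith)⟩

theorem factorial_card_le_pow_of_forall_strictMono [Nonempty κ] [FiniteDimensional ℝ E]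
    (d : κ → E) (h : ∀ π : Equiv.Perm κ, ∃ q, StrictMono fun i => ‖q - d (π i)‖) :
    (Fintype.card κ)! ≤ Fintype.card κ ^ (2 * finrank ℝ E) := by
  have hk : Fintype.card κ ≤ Fintype.card κ * Fintype.card κ := Nat.le_mul_self _
  have hk₀ := Fintype.card_pos (α := κ)
  calc (Fintype.card κ)! = #(univ : Finset (Equiv.Perm κ)) := by rw [card_univ, Fintype.card_perm]
    _ ≤ #(signPatterns (sqDistDiff d) univ.offDiag) :=
        card_le_card_of_injOn precedencePairs
          (fun π _ => mem_signPatterns.2 ((h π).imp fun _ => hasSignPatternAt_precedencePairs))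
          precedencePairs_injective.injOn
    _ ≤ (#(univ : Finset κ).offDiag + 1) ^ finrank ℝ E := card_signPatterns_le _ _
    _ ≤ (Fintype.card κ ^ 2) ^ finrank ℝ E := by
        gcongr
        rw [offDiag_card, card_univ, sq]
        omega
    _ = Fintype.card κ ^ (2 * finrank ℝ E) := by rw [pow_mul]

end DistancePermutations

theorem de_dimension_grows_linearly_general
    (k n : ℕ) (hk : 2 ≤ k)
    (hdim : (n : ℝ) < (k : ℝ) / 2 - (k : ℝ) / (2 * Real.log k)) :
    (n : ℝ) < Real.log (Nat.factorial k) / (2 * Real.log k) ∧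
    ∀ d : Fin k → EuclideanSpace ℝ (Fin n),
      ∃ π : Equiv.Perm (Fin k),
        ¬ ∃ q : EuclideanSpace ℝ (Fin n),
            StrictMono (fun i : Fin k => ‖q - d (π i)‖) := by
  have hlog : 0 < Real.log k := Real.log_pos (by exact_mod_cast hk)
  have hstirling : k * Real.log k - k ≤ Real.log k ! := by
    have := Stirling.le_log_factorial_stirling (n := k) (by omega)
    have : 0 < Real.log (2 * Real.pi) := Real.log_pos (by linarith [Real.pi_gt_three])
    linarith
  have hbound : (n : ℝ) < Real.log k ! / (2 * Real.log k) := by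
    refine hdim.trans_le ?_
    rw [show (k : ℝ) / 2 - k / (2 * Real.log k) = (k * Real.log k - k) / (2 * Real.log k) by
      field_simp]
    gcongr
  refine ⟨hbound, fun d => ?_⟩
  by_contra! h
  have : Nonempty (Fin k) := ⟨⟨0, by omega⟩⟩
  have hle := factorial_card_le_pow_of_forall_strictMono d h
  rw [Fintype.card_fin, finrank_euclideanSpace_fin] at hle
  have hlt : (k : ℝ) ^ (2 * n) < k ! := by
    rw [← Real.log_lt_log_iff (by positivity) (by positivity), Real.log_pow]
    rw [lt_div_iff₀ (by positivity)] at hbound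
    push_cast
    linarith
  exact hlt.not_ge (by exact_mod_cast hle)

/-- If `k ≥ 2`, `n ≥ 1` and `n < k/2 − k/(2 ln k)`, then
`n < ln(k!)/(2 ln k)`, and hence for every family of `k` points in `ℝⁿ` there is a
permutation `π` not realized as a distance permutation by any query point `q ∈ ℝⁿ`.
In particular, the embedding dimension of a dual encoder must grow linearly in the
corpus size `k` in order to solve a complete ranking task. -/
theorem de_dimension_grows_linearly
    (k n : ℕ) (hk : 2 ≤ k) (hn : 1 ≤ n)
    (hdim : (n : ℝ) < (k : ℝ) / 2 - (k : ℝ) / (2 * Real.log k)) :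
    (n : ℝ) < Real.log (Nat.factorial k) / (2 * Real.log k) ∧
    ∀ d : Fin k → EuclideanSpace ℝ (Fin n),
      ∃ π : Equiv.Perm (Fin k),
        ¬ ∃ q : EuclideanSpace ℝ (Fin n),
            StrictMono (fun i : Fin k => ‖q - d (π i)‖) :=
  de_dimension_grows_linearly_general k n hk hdim
end

section
/- Let E ∈ ℝ^{m×n} be a matrix whose rows are token embeddings, let E′ ∈ ℝ^{m×(n+1)} be E augmented with a column of all ones, and let L ≥ 1. Then the following are equivalent: (i) for every strictly positive probability distribution p on sequences (s₁, …, s_L) ∈ {1, …, m}^L there exists a function f assigning to every prefix (s₁, …, s_{t−1}) (with 0 ≤ t−1 < L) a vector f(s₁, …, s_{t−1}) ∈ ℝⁿ such that p(s₁, …, s_L) = ∏_{t=1}^{L} softmax(E·f(s₁, …, s_{t−1}))_{s_t} for every sequence; (ii) rank(E′) = m. -/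
/-- The softmax of a logit vector `z ∈ ℝ^m`. -/
noncomputable def softmax {m : ℕ} (z : Fin m → ℝ) : Fin m → ℝ :=
  fun i => Real.exp (z i) / ∑ j, Real.exp (z j)

/-- The matrix `E ∈ ℝ^{m×n}` augmented with a column of all ones, `E′ ∈ ℝ^{m×(n+1)}`. -/
def augmentOnes {m n : ℕ} (E : Matrix (Fin m) (Fin n) ℝ) :
    Matrix (Fin m) (Fin (n + 1)) ℝ :=
  fun i j => if hj : (j : ℕ) < n then E i ⟨j, hj⟩ else 1

lemma sumexp_pos {m : ℕ} (hm : 0 < m) (z : Fin m → ℝ) : 0 < ∑ j, Real.exp (z j) :=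
  Finset.sum_pos (fun j _ => Real.exp_pos _) (Finset.univ_nonempty_iff.2 ⟨⟨0, hm⟩⟩)

lemma softmax_pos {m : ℕ} (hm : 0 < m) (z : Fin m → ℝ) (i : Fin m) : 0 < softmax z i :=
  div_pos (Real.exp_pos _) (sumexp_pos hm z)

lemma softmax_sum {m : ℕ} (hm : 0 < m) (z : Fin m → ℝ) : ∑ i, softmax z i = 1 := by
  unfold softmax
  rw [← Finset.sum_div, div_self (sumexp_pos hm z).ne']

lemma augment_mulVec {m n : ℕ} (E : Matrix (Fin m) (Fin n) ℝ) (x : Fin n → ℝ) (c : ℝ) :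
    (augmentOnes E).mulVec (Fin.snoc x c) = fun i => E.mulVec x i + c := by
  funext i
  simp only [Matrix.mulVec, dotProduct, augmentOnes, Fin.sum_univ_castSucc]
  congr 1
  · refine Finset.sum_congr rfl fun j _ => ?_
    rw [dif_pos (by simp), Fin.snoc_castSucc]
    congr 1
  · rw [dif_neg (by simp), Fin.snoc_last, one_mul]

lemma rank_eq_iff_surj {m k : ℕ} (A : Matrix (Fin m) (Fin k) ℝ) :
    A.rank = m ↔ Function.Surjective A.mulVec := by
  constructor
  · intro h v
    have htop : LinearMap.range A.mulVecLin = ⊤ := by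
      apply Submodule.eq_top_of_finrank_eq
      rw [← Matrix.rank, h, Module.finrank_fin_fun]
    have : v ∈ LinearMap.range A.mulVecLin := htop ▸ Submodule.mem_top
    obtain ⟨w, hw⟩ := this
    exact ⟨w, hw⟩
  · intro h
    have htop : LinearMap.range A.mulVecLin = ⊤ := LinearMap.range_eq_top.2 h
    rw [Matrix.rank, htop, finrank_top, Module.finrank_fin_fun]

/-- If the augmented matrix has full rank, any strictly positive distribution on tokens
is realizable as a softmax of logits `E x`. -/
lemma exists_softmax_eq {m n : ℕ} (hm : 0 < m) (E : Matrix (Fin m) (Fin n) ℝ)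
    (hr : (augmentOnes E).rank = m) (q : Fin m → ℝ) (hq : ∀ i, 0 < q i)
    (hsum : ∑ i, q i = 1) : ∃ x : Fin n → ℝ, softmax (E.mulVec x) = q := by
  obtain ⟨w, hw⟩ := (rank_eq_iff_surj _).1 hr (fun i => Real.log (q i))
  refine ⟨Fin.init w, ?_⟩
  set x := Fin.init w
  set c := w (Fin.last n)
  have hwx : (augmentOnes E).mulVec w = fun i => E.mulVec x i + c := by
    rw [← augment_mulVec E x c, Fin.snoc_init_self]
  have hx : ∀ i, E.mulVec x i = Real.log (q i) - c := by
    intro i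
    have := congrFun hw i
    rw [hwx] at this
    simp only at this
    linarith [this]
  funext i
  unfold softmax
  have hexp : ∀ j, Real.exp (E.mulVec x j) = q j * Real.exp (-c) := by
    intro j
    rw [hx j, sub_eq_add_neg, Real.exp_add, Real.exp_log (hq j)]
  rw [hexp i]
  have : ∑ j, Real.exp (E.mulVec x j) = Real.exp (-c) := by
    simp_rw [hexp, ← Finset.sum_mul, hsum, one_mul]
  rw [this, mul_div_assoc, div_self (Real.exp_pos _).ne', mul_one]

section Pre
variable {m L : ℕ} (p : (Fin L → Fin m) → ℝ)

noncomputable def pre (t : ℕ) (s : Fin L → Fin m) : ℝ :=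
  ∑ s' ∈ Finset.univ.filter
      (fun s' : Fin L → Fin m => ∀ i : Fin L, (i : ℕ) < t → s' i = s i), p s'

lemma pre_pos (hp : ∀ s, 0 < p s) (t : ℕ) (s : Fin L → Fin m) : 0 < pre p t s :=
  Finset.sum_pos (fun s' _ => hp s') ⟨s, by simp⟩

lemma pre_zero (s : Fin L → Fin m) : pre p 0 s = ∑ s', p s' := by
  unfold pre
  rw [Finset.filter_true_of_mem (fun s' _ => by omega)]

lemma pre_last (s : Fin L → Fin m) : pre p L s = p s := by
  unfold pre
  rw [show Finset.univ.filter
      (fun s' : Fin L → Fin m => ∀ i : Fin L, (i : ℕ) < L → s' i = s i) = {s} from ?_]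
  · simp
  · ext s'
    simp only [Finset.mem_filter, Finset.mem_univ, true_and, Finset.mem_singleton]
    constructor
    · intro h; funext i; exact h i i.isLt
    · rintro rfl; exact fun _ _ => rfl

lemma pre_congr {t : ℕ} {s s'' : Fin L → Fin m}
    (h : ∀ i : Fin L, (i : ℕ) < t → s i = s'' i) : pre p t s = pre p t s'' := by
  unfold pre
  congr 1
  ext s'
  simp only [Finset.mem_filter, Finset.mem_univ, true_and]
  constructor
  · intro hh i hi; rw [hh i hi, h i hi]
  · intro hh i hi; rw [hh i hi, ← h i hi]

lemma pre_succ (t : Fin L) (s : Fin L → Fin m) :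
    pre p (t : ℕ) s = ∑ i : Fin m, pre p ((t : ℕ) + 1) (Function.update s t i) := by
  classical
  unfold pre
  rw [← Finset.sum_fiberwise_of_maps_to
      (g := fun s' : Fin L → Fin m => s' t) (t := Finset.univ) (fun _ _ => Finset.mem_univ _)]
  refine Finset.sum_congr rfl fun i _ => ?_
  congr 1
  ext s'
  simp only [Finset.mem_filter, Finset.mem_univ, true_and]
  constructor
  · rintro ⟨h1, h2⟩ j hj
    rcases Nat.lt_or_ge (j : ℕ) (t : ℕ) with hlt | hge
    · rw [h1 j hlt, Function.update_of_ne (by exact fun hjt => by subst hjt; omega)]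
    · have hjt : j = t := Fin.ext (by omega)
      subst hjt
      rw [h2, Function.update_self]
  · intro h
    constructor
    · intro j hj
      rw [h j (by omega), Function.update_of_ne (by exact fun hjt => by subst hjt; omega)]
    · have := h t (by omega)
      rwa [Function.update_self] at this

lemma pre_telescope (hp : ∀ s, 0 < p s) (s : Fin L → Fin m) (N : ℕ) :
    ∏ t ∈ Finset.range N, (pre p (t + 1) s / pre p t s) = pre p N s / pre p 0 s := by
  induction N with
  | zero => simp [div_self (pre_pos p hp 0 s).ne']
  | succ N ih =>
    rw [Finset.prod_range_succ, ih]
    have h0 := (pre_pos p hp 0 s).ne'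
    have hN := (pre_pos p hp N s).ne'
    field_simp

end Pre

set_option maxHeartbeats 1000000 in
/-- Forward auxiliary: universality implies every vector is in the range of the
augmented matrix. -/
lemma forward_surj {m n L : ℕ} (hm : 0 < m) (hL : 1 ≤ L) (E : Matrix (Fin m) (Fin n) ℝ)
    (h : ∀ p : (Fin L → Fin m) → ℝ, (∀ s, 0 < p s) → (∑ s, p s) = 1 →
        ∃ f : (t : Fin L) → (Fin (t : ℕ) → Fin m) → (Fin n → ℝ),
          ∀ s : Fin L → Fin m,
            p s = ∏ t : Fin L,
              softmax (E.mulVec (f t (fun i => s ⟨(i : ℕ), i.isLt.trans t.isLt⟩))) (s t))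
    (v : Fin m → ℝ) : ∃ w, (augmentOnes E).mulVec w = v := by
  classical
  set z0 : Fin m := ⟨0, hm⟩
  set q : Fin m → ℝ := softmax v with hqdef
  have hqpos : ∀ i, 0 < q i := softmax_pos hm v
  have hqsum : ∑ i, q i = 1 := softmax_sum hm v
  set p : (Fin L → Fin m) → ℝ := fun s => ∏ t, q (s t) with hpdef
  have hppos : ∀ s, 0 < p s := fun s => Finset.prod_pos fun t _ => hqpos (s t)
  have hpsum : ∑ s, p s = 1 := by
    simp only [hpdef]
    rw [← Fintype.sum_pow q L, hqsum, one_pow]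
  obtain ⟨f, hf⟩ := h p hppos hpsum
  set tL : Fin L := ⟨L - 1, by omega⟩ with htLdef
  set sq : Fin m → (Fin L → Fin m) := fun i t => if (t : ℕ) = L - 1 then i else z0 with hsqdef
  have hpre : ∀ (i : Fin m) (t : Fin L),
      (fun j : Fin (t : ℕ) => sq i ⟨(j : ℕ), j.isLt.trans t.isLt⟩) = (fun _ => z0) := by
    intro i t
    funext j
    have hj : (j : ℕ) < (t : ℕ) := j.isLt
    have ht : (t : ℕ) < L := t.isLt
    simp only [hsqdef]
    rw [if_neg (by omega)]
  set G : (t : Fin L) → Fin m → ℝ := fun t k =>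
    softmax (E.mulVec (f t (fun _ => z0))) k with hGdef
  have hfac : ∀ i : Fin m, ∏ t : Fin L, q (sq i t) = ∏ t : Fin L, G t (sq i t) := by
    intro i
    have h1 : p (sq i) = _ := hf (sq i)
    rw [hpdef] at h1
    simp only at h1
    rw [h1]
    refine Finset.prod_congr rfl fun t _ => ?_
    rw [hGdef]
    simp only
    rw [hpre i t]
  have hsqtL : ∀ i, sq i tL = i := fun i => by simp [hsqdef, htLdef]
  have hsqne : ∀ (i : Fin m) (t : Fin L), t ≠ tL → sq i t = z0 := by
    intro i t ht
    have : (t : ℕ) ≠ L - 1 := fun hc => ht (Fin.ext hc)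
    simp [hsqdef, this]
  set C : ℝ := ∏ _t ∈ Finset.univ.erase tL, q z0 with hCdef
  set D : ℝ := ∏ t ∈ Finset.univ.erase tL, G t z0 with hDdef
  have hCD : ∀ i : Fin m, q i * C = G tL i * D := by
    intro i
    have h1 := hfac i
    rw [← Finset.mul_prod_erase Finset.univ _ (Finset.mem_univ tL),
        ← Finset.mul_prod_erase Finset.univ (fun t => G t (sq i t)) (Finset.mem_univ tL),
        hsqtL i] at h1
    have h2 : ∏ t ∈ Finset.univ.erase tL, q (sq i t) = C :=
      Finset.prod_congr rfl fun t ht => by rw [hsqne i t (Finset.ne_of_mem_erase ht)]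
    have h3 : ∏ t ∈ Finset.univ.erase tL, G t (sq i t) = D :=
      Finset.prod_congr rfl fun t ht => by rw [hsqne i t (Finset.ne_of_mem_erase ht)]
    rw [h2, h3] at h1
    exact h1
  have hCpos : 0 < C := Finset.prod_pos fun _ _ => hqpos z0
  have hCeqD : C = D := by
    have h1 : ∑ i, q i * C = ∑ i, G tL i * D := Finset.sum_congr rfl fun i _ => hCD i
    rw [← Finset.sum_mul, ← Finset.sum_mul, hqsum, one_mul] at h1
    rw [h1, hGdef]
    rw [softmax_sum hm, one_mul]
  have hqG : ∀ i, q i = G tL i := by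
    intro i
    have h1 := hCD i
    rw [← hCeqD] at h1
    exact mul_right_cancel₀ hCpos.ne' h1
  set u : Fin m → ℝ := E.mulVec (f tL (fun _ => z0)) with hudef
  have hrel : ∀ i, Real.exp (v i) / (∑ j, Real.exp (v j)) =
      Real.exp (u i) / (∑ j, Real.exp (u j)) := fun i => hqG i
  have hZv := sumexp_pos hm v
  have hZu := sumexp_pos hm u
  set c : ℝ := Real.log (∑ j, Real.exp (v j)) - Real.log (∑ j, Real.exp (u j)) with hcdef
  have hv : ∀ i, v i = u i + c := by
    intro i
    have h3 : Real.exp (v i) * (∑ j, Real.exp (u j)) =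
        Real.exp (u i) * (∑ j, Real.exp (v j)) :=
      (div_eq_div_iff hZv.ne' hZu.ne').1 (hrel i)
    have h2 : Real.exp (v i) =
        Real.exp (u i) * ((∑ j, Real.exp (v j)) / (∑ j, Real.exp (u j))) := by
      rw [← mul_div_assoc, ← h3, mul_div_assoc, div_self hZu.ne', mul_one]
    have h4 := congrArg Real.log h2
    rwa [Real.log_exp, Real.log_mul (Real.exp_pos _).ne' (div_pos hZv hZu).ne',
        Real.log_exp, Real.log_div hZv.ne' hZu.ne'] at h4
  refine ⟨Fin.snoc (f tL (fun _ => z0)) c, ?_⟩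
  rw [augment_mulVec]
  funext i
  show E.mulVec (f tL (fun _ => z0)) i + c = v i
  rw [hv i]

set_option maxHeartbeats 1000000 in
/-- Backward auxiliary: full rank implies universality. -/
lemma backward_univ {m n L : ℕ} (hm : 0 < m) (E : Matrix (Fin m) (Fin n) ℝ)
    (hr : (augmentOnes E).rank = m)
    (p : (Fin L → Fin m) → ℝ) (hp : ∀ s, 0 < p s) (hsum : (∑ s, p s) = 1) :
    ∃ f : (t : Fin L) → (Fin (t : ℕ) → Fin m) → (Fin n → ℝ),
      ∀ s : Fin L → Fin m,
        p s = ∏ t : Fin L,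
          softmax (E.mulVec (f t (fun i => s ⟨(i : ℕ), i.isLt.trans t.isLt⟩))) (s t) := by
  classical
  set z0 : Fin m := ⟨0, hm⟩
  set ext : (t : Fin L) → (Fin (t : ℕ) → Fin m) → (Fin L → Fin m) :=
    fun t pr j => if h : (j : ℕ) < (t : ℕ) then pr ⟨(j : ℕ), h⟩ else z0 with hextdef
  set Q : (t : Fin L) → (Fin (t : ℕ) → Fin m) → Fin m → ℝ :=
    fun t pr i =>
      pre p ((t : ℕ) + 1) (Function.update (ext t pr) t i) / pre p (t : ℕ) (ext t pr)
    with hQdef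
  have hQpos : ∀ t pr i, 0 < Q t pr i := fun t pr i =>
    div_pos (pre_pos p hp _ _) (pre_pos p hp _ _)
  have hQsum : ∀ t pr, ∑ i, Q t pr i = 1 := by
    intro t pr
    rw [hQdef]
    simp only
    rw [← Finset.sum_div, ← pre_succ p t (ext t pr),
      div_self (pre_pos p hp _ _).ne']
  have hreal : ∀ (t : Fin L) (pr : Fin (t : ℕ) → Fin m),
      ∃ x : Fin n → ℝ, softmax (E.mulVec x) = Q t pr := fun t pr =>
    exists_softmax_eq hm E hr (Q t pr) (hQpos t pr) (hQsum t pr)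
  refine ⟨fun t pr => Classical.choose (hreal t pr), ?_⟩
  intro s
  have hfac : ∀ t : Fin L,
      softmax (E.mulVec (Classical.choose (hreal t (fun i => s ⟨(i : ℕ), i.isLt.trans t.isLt⟩))))
        (s t) = pre p ((t : ℕ) + 1) s / pre p (t : ℕ) s := by
    intro t
    set pr : Fin (t : ℕ) → Fin m := fun i => s ⟨(i : ℕ), i.isLt.trans t.isLt⟩ with hprdef
    rw [Classical.choose_spec (hreal t pr)]
    rw [hQdef]
    simp only
    have hagree : ∀ i : Fin L, (i : ℕ) < (t : ℕ) → ext t pr i = s i := by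
      intro i hi
      simp only [hextdef]
      rw [dif_pos hi]
    congr 1
    · refine pre_congr p fun i hi => ?_
      rcases Nat.lt_or_ge (i : ℕ) (t : ℕ) with hlt | hge
      · rw [Function.update_of_ne (fun hc => by subst hc; omega), hagree i hlt]
      · have : i = t := Fin.ext (by omega)
        subst this
        rw [Function.update_self]
    · exact pre_congr p fun i hi => hagree i hi
  calc p s = pre p L s / pre p 0 s := by
        rw [pre_last, pre_zero, hsum, div_one]
    _ = ∏ t ∈ Finset.range L, (pre p (t + 1) s / pre p t s) := (pre_telescope p hp s L).symm
    _ = ∏ t : Fin L, (pre p ((t : ℕ) + 1) s / pre p (t : ℕ) s) := by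
        rw [Fin.prod_univ_eq_prod_range (fun t => pre p (t + 1) s / pre p t s) L]
    _ = _ := by
        refine Finset.prod_congr rfl fun t _ => ?_
        rw [hfac t]

set_option maxHeartbeats 1000000 in
/-- Arbitrary distributions over sequences: an infinite-capacity ARR with
token-embedding matrix `E` can produce, via the chain rule (hidden vector `f` for each
prefix, next-token probabilities given by softmax of the corresponding logits), every
strictly positive probability distribution over length-`L` token sequences iff the
augmented matrix `E′` has rank `m`. -/
theorem arbitrary_sequence_distributions_iff_rank
    (m n L : ℕ) (hL : 1 ≤ L) (E : Matrix (Fin m) (Fin n) ℝ) :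
    (∀ p : (Fin L → Fin m) → ℝ, (∀ s, 0 < p s) → (∑ s, p s) = 1 →
        ∃ f : (t : Fin L) → (Fin (t : ℕ) → Fin m) → (Fin n → ℝ),
          ∀ s : Fin L → Fin m,
            p s = ∏ t : Fin L,
              softmax (E.mulVec (f t (fun i => s ⟨(i : ℕ), i.isLt.trans t.isLt⟩))) (s t)) ↔
    (augmentOnes E).rank = m := by
  rcases Nat.eq_zero_or_pos m with hm | hm
  · subst hm
    constructor
    · intro _
      have := (augmentOnes E).rank_le_card_height
      simpa using this
    · intro _ p hp hsum
      exfalso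
      haveI : Nonempty (Fin L) := ⟨⟨0, by omega⟩⟩
      haveI : IsEmpty (Fin L → Fin 0) := by infer_instance
      simp [Finset.univ_eq_empty] at hsum
  constructor
  · intro h
    rw [rank_eq_iff_surj]
    exact forward_surj hm hL E h
  · intro hr p hp hsum
    exact backward_univ hm E hr p hp hsum
end
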